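/- Let θ, γ₁, ..., γ_N ∈ [0, π/2] and probabilities p_k summing to 1 satisfy Σ_k p_k(1 − cos γ_k) ≤ 1 − cos θ. Define γ ∈ [0, π/2] by cos γ = Σ_k p_k cos γ_k, and for each k set a_k = (√p_k/2)[cos(γ_k/2)/cos(γ/2) + sin(γ_k/2)/sin(γ/2)], b_k = (√p_k/2)[cos(γ_k/2)/cos(γ/2) − sin(γ_k/2)/sin(γ/2)], K_k = [[a_k, b_k],[b_k, a_k]] (assuming 0 < γ). Then Σ_k K_k†K_k = I and K_k|ψ_γ⟩ = √p_k |ψ_{γ_k}⟩, where |ψ_α⟩ = (1/√2)(e^{iα/2}, e^{−iα/2})^T. -/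

import Mathlib

open Complex Matrix

/-!
Write `C = cos (γ/2)`, `S = sin (γ/2)`. A real matrix `[[a, b], [b, a]]` maps
`(C + iS, C - iS)` to `((a+b)C + i(a-b)S, (a+b)C - i(a-b)S)`, so it sends `|ψ_γ⟩` to
`√p_k |ψ_{γ_k}⟩` exactly when `(a+b) C = √p_k cos(γ_k/2)` and `(a-b) S = √p_k sin(γ_k/2)`,
which is how `a_k, b_k` are chosen. Completeness `Σ Kᵀ K = 1` amounts to
`Σ (a+b)² = Σ (a-b)² = 1`, i.e. to `Σ p_k cos²(γ_k/2) = C²` and `Σ p_k sin²(γ_k/2) = S²`;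
by the half-angle formulas both are the defining relation `cos γ = Σ p_k cos γ_k`.
-/

/-- The standard state `|ψ_α⟩ = (1/√2)(e^{iα/2}, e^{-iα/2})ᵀ`. -/
noncomputable def stdState (α : ℝ) : Fin 2 → ℂ := fun i =>
  if i = 0 then Complex.exp (Complex.I * (α : ℂ) / 2) / (Real.sqrt 2 : ℂ)
  else Complex.exp (-(Complex.I * (α : ℂ)) / 2) / (Real.sqrt 2 : ℂ)

lemma cos_sq_half (x : ℝ) : Real.cos (x / 2) ^ 2 = (1 + Real.cos x) / 2 := by
  rw [Real.cos_sq]; ring_nf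

lemma sin_sq_half (x : ℝ) : Real.sin (x / 2) ^ 2 = (1 - Real.cos x) / 2 := by
  rw [Real.sin_sq, cos_sq_half]; ring

section WeightedSums

variable {ι : Type*} [Fintype ι] {p x : ι → ℝ} {y : ℝ}

lemma sum_mul_cos_sq_half (hp1 : ∑ i, p i = 1) (hy : Real.cos y = ∑ i, p i * Real.cos (x i)) :
    ∑ i, p i * Real.cos (x i / 2) ^ 2 = Real.cos (y / 2) ^ 2 := by
  simp_rw [cos_sq_half, hy, mul_div_assoc', mul_add, add_div, Finset.sum_add_distrib,
    ← Finset.sum_div, mul_one, hp1]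

lemma sum_mul_sin_sq_half (hp1 : ∑ i, p i = 1) (hy : Real.cos y = ∑ i, p i * Real.cos (x i)) :
    ∑ i, p i * Real.sin (x i / 2) ^ 2 = Real.sin (y / 2) ^ 2 := by
  simp_rw [sin_sq_half, hy, mul_div_assoc', mul_sub, sub_div, Finset.sum_sub_distrib,
    ← Finset.sum_div, mul_one, hp1]

lemma sum_sq_sqrt_mul_div_eq_one (hp : ∀ i, 0 ≤ p i) {c : ℝ} (hc : c ≠ 0)
    (h : ∑ i, p i * x i ^ 2 = c ^ 2) : ∑ i, (Real.sqrt (p i) * x i / c) ^ 2 = 1 := by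
  simp_rw [div_pow, mul_pow, Real.sq_sqrt (hp _), ← Finset.sum_div, h]
  exact div_self (pow_ne_zero 2 hc)

end WeightedSums

lemma sum_transpose_mul_self_eq_one {ι : Type*} [Fintype ι] (a b : ι → ℝ)
    (hadd : ∑ i, (a i + b i) ^ 2 = 1) (hsub : ∑ i, (a i - b i) ^ 2 = 1) :
    ∑ i, (!![a i, b i; b i, a i])ᵀ * !![a i, b i; b i, a i] = 1 := by
  have hK : ∀ i, (!![a i, b i; b i, a i])ᵀ * !![a i, b i; b i, a i] =
      (((a i + b i) ^ 2 + (a i - b i) ^ 2) / 2) • 1 +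
        (((a i + b i) ^ 2 - (a i - b i) ^ 2) / 2) • !![0, 1; 1, 0] := by
    intro i
    rw [one_fin_two]
    ext j k; fin_cases j <;> fin_cases k <;> simp [mul_apply, Fin.sum_univ_two] <;> ring
  simp_rw [hK, Finset.sum_add_distrib, ← Finset.sum_smul, ← Finset.sum_div,
    Finset.sum_add_distrib, Finset.sum_sub_distrib, hadd, hsub]
  norm_num

lemma exp_I_mul_div_two (α : ℝ) :
    Complex.exp (Complex.I * α / 2) = Real.cos (α / 2) + Real.sin (α / 2) * Complex.I := by
  rw [show Complex.I * α / 2 = ((α / 2 : ℝ) : ℂ) * Complex.I by push_cast; ring,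
    Complex.exp_mul_I, ← Complex.ofReal_cos, ← Complex.ofReal_sin]

lemma exp_neg_I_mul_div_two (α : ℝ) :
    Complex.exp (-(Complex.I * α) / 2) = Real.cos (α / 2) - Real.sin (α / 2) * Complex.I := by
  rw [show -(Complex.I * α) / 2 = ((-(α / 2) : ℝ) : ℂ) * Complex.I by push_cast; ring,
    Complex.exp_mul_I, ← Complex.ofReal_cos, ← Complex.ofReal_sin, Real.cos_neg, Real.sin_neg]
  push_cast; ring

lemma map_ofReal_mulVec_stdState {a b s α β : ℝ}
    (hadd : (a + b) * Real.cos (α / 2) = s * Real.cos (β / 2))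
    (hsub : (a - b) * Real.sin (α / 2) = s * Real.sin (β / 2)) :
    (!![a, b; b, a].map Complex.ofReal).mulVec (stdState α) = (s : ℂ) • stdState β := by
  have hadd' : ((a : ℂ) + b) * (Real.cos (α / 2) : ℂ) = s * (Real.cos (β / 2) : ℂ) := by
    exact_mod_cast hadd
  have hsub' : ((a : ℂ) - b) * (Real.sin (α / 2) : ℂ) = s * (Real.sin (β / 2) : ℂ) := by
    exact_mod_cast hsub
  ext i
  fin_cases i <;>
    simp only [mulVec, dotProduct, Fin.sum_univ_two, Fin.zero_eta, Fin.mk_one, Fin.isValue,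
      map_apply, of_apply, cons_val', cons_val_fin_one, cons_val_zero, cons_val_one, stdState,
      exp_I_mul_div_two, exp_neg_I_mul_div_two, mul_ite, ↓reduceIte, one_ne_zero,
      Pi.smul_apply, smul_eq_mul]
  · linear_combination (hadd' + hsub' * I) / (Real.sqrt 2 : ℂ)
  · linear_combination (hadd' - hsub' * I) / (Real.sqrt 2 : ℂ)

theorem jonathan_plenio_construction_general
    {N : ℕ}
    (γk : Fin N → ℝ)
    (p : Fin N → ℝ) (hp : ∀ k, 0 ≤ p k) (hp1 : ∑ k, p k = 1)
    (γ : ℝ) (hγ : γ ∈ Set.Icc 0 (Real.pi / 2)) (hγpos : 0 < γ)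
    (hγdef : Real.cos γ = ∑ k, p k * Real.cos (γk k))
    (a b : Fin N → ℝ)
    (ha : ∀ k, a k = Real.sqrt (p k) / 2 *
      (Real.cos (γk k / 2) / Real.cos (γ / 2) + Real.sin (γk k / 2) / Real.sin (γ / 2)))
    (hb : ∀ k, b k = Real.sqrt (p k) / 2 *
      (Real.cos (γk k / 2) / Real.cos (γ / 2) - Real.sin (γk k / 2) / Real.sin (γ / 2)))
    (K : Fin N → Matrix (Fin 2) (Fin 2) ℝ)
    (hKdef : ∀ k, K k = !![a k, b k; b k, a k]) :
    (∑ k, (K k)ᵀ * K k = 1) ∧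
    (∀ k, ((K k).map Complex.ofReal).mulVec (stdState γ)
        = (Real.sqrt (p k) : ℂ) • stdState (γk k)) := by
  have hC : Real.cos (γ / 2) ≠ 0 :=
    (Real.cos_pos_of_mem_Ioo ⟨by linarith [Real.pi_pos], by linarith [hγ.2]⟩).ne'
  have hS : Real.sin (γ / 2) ≠ 0 :=
    (Real.sin_pos_of_pos_of_lt_pi (by linarith) (by linarith [hγ.2, Real.pi_pos])).ne'
  have hadd : ∀ k, a k + b k = Real.sqrt (p k) * Real.cos (γk k / 2) / Real.cos (γ / 2) := by
    intro k; rw [ha, hb]; ring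
  have hsub : ∀ k, a k - b k = Real.sqrt (p k) * Real.sin (γk k / 2) / Real.sin (γ / 2) := by
    intro k; rw [ha, hb]; ring
  refine ⟨?_, fun k => ?_⟩
  · simp_rw [hKdef]
    refine sum_transpose_mul_self_eq_one a b ?_ ?_
    · simp_rw [hadd]
      exact sum_sq_sqrt_mul_div_eq_one hp hC (sum_mul_cos_sq_half hp1 hγdef)
    · simp_rw [hsub]
      exact sum_sq_sqrt_mul_div_eq_one hp hS (sum_mul_sin_sq_half hp1 hγdef)
  · rw [hKdef]
    exact map_ofReal_mulVec_stdState (by rw [hadd, div_mul_cancel₀ _ hC])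
      (by rw [hsub, div_mul_cancel₀ _ hS])

/-- the explicit measurement of the Jonathan–Plenio analogue: with
`cos γ = Σ_k p_k cos γ_k` (`0 < γ ≤ π/2`) and real Kraus operators
`K_k = [[a_k, b_k], [b_k, a_k]]` built from
`a_k = (√p_k/2)[cos(γ_k/2)/cos(γ/2) + sin(γ_k/2)/sin(γ/2)]`,
`b_k = (√p_k/2)[cos(γ_k/2)/cos(γ/2) - sin(γ_k/2)/sin(γ/2)]`,
one has `Σ_k K_k†K_k = 1` and `K_k|ψ_γ⟩ = √p_k |ψ_{γ_k}⟩`. -/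
theorem jonathan_plenio_construction
    {N : ℕ} (θ : ℝ) (hθ : θ ∈ Set.Icc 0 (Real.pi / 2))
    (γk : Fin N → ℝ) (hγk : ∀ k, γk k ∈ Set.Icc 0 (Real.pi / 2))
    (p : Fin N → ℝ) (hp : ∀ k, 0 ≤ p k) (hp1 : ∑ k, p k = 1)
    (havg : ∑ k, p k * (1 - Real.cos (γk k)) ≤ 1 - Real.cos θ)
    (γ : ℝ) (hγ : γ ∈ Set.Icc 0 (Real.pi / 2)) (hγpos : 0 < γ)
    (hγdef : Real.cos γ = ∑ k, p k * Real.cos (γk k))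
    (a b : Fin N → ℝ)
    (ha : ∀ k, a k = Real.sqrt (p k) / 2 *
      (Real.cos (γk k / 2) / Real.cos (γ / 2) + Real.sin (γk k / 2) / Real.sin (γ / 2)))
    (hb : ∀ k, b k = Real.sqrt (p k) / 2 *
      (Real.cos (γk k / 2) / Real.cos (γ / 2) - Real.sin (γk k / 2) / Real.sin (γ / 2)))
    (K : Fin N → Matrix (Fin 2) (Fin 2) ℝ)
    (hKdef : ∀ k, K k = !![a k, b k; b k, a k]) :
    (∑ k, (K k)ᵀ * K k = 1) ∧
    (∀ k, ((K k).map Complex.ofReal).mulVec (stdState γ)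
        = (Real.sqrt (p k) : ℂ) • stdState (γk k)) :=
  jonathan_plenio_construction_general γk p hp hp1 γ hγ hγpos hγdef a b ha hb K hKdef
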